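/- arXiv:2410.03575 — 3 statements merged into one kernel-verified Lean document; each statement's English description precedes it below -/
import Mathlib

section
/- Let A ∈ ℂ^{n×n}, B ∈ ℂ^{d×d}, E ∈ ℂ^{n×d}, and let s ≥ 0 be an integer. Define X₀ = exp(2^{-s}A), Y₀ = exp(2^{-s}B), D₀ = L_exp(2^{-s}A, 2^{-s}B, 2^{-s}E), and recursively for i = 0, …, s−1: D_{i+1} = X_i D_i + D_i Y_i, X_{i+1} = X_i², Y_{i+1} = Y_i². Then X_s = exp(A), Y_s = exp(B), and D_s = L_exp(A, B, E). -/
/-!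
Powers of `M = [[A, E], [0, B]]` stay block upper triangular with diagonal blocks `A ^ k` and
`B ^ k`, so `exp M = [[exp A, L_exp(A, B, E)], [0, exp B]]`. Since
`[[X, D], [0, Y]] ^ 2 = [[X ^ 2, X D + D Y], [0, Y ^ 2]]`, the recurrence says exactly that
`Z i = [[X i, D i], [0, Y i]]` is squared at each step, so `Z s = exp (2⁻ˢ M) ^ 2 ^ s = exp M`.
-/

open NormedSpace Matrix

/-- `L_exp(A, B, E)` is the `(1,2)` block of `exp [[A, E],[0, B]]`. -/
noncomputable def Lexp {n d : ℕ} (A : Matrix (Fin n) (Fin n) ℂ) (B : Matrix (Fin d) (Fin d) ℂ)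
    (E : Matrix (Fin n) (Fin d) ℂ) : Matrix (Fin n) (Fin d) ℂ :=
  (NormedSpace.exp (Matrix.fromBlocks A E 0 B)).toBlocks₁₂

theorem eq_pow_two_pow_of_succ_eq_sq {M : Type*} [Monoid M] {Z : ℕ → M} {s : ℕ}
    (h : ∀ i < s, Z (i + 1) = Z i ^ 2) : ∀ i ≤ s, Z i = Z 0 ^ 2 ^ i := by
  intro i hi
  induction i with
  | zero => rw [pow_zero, pow_one]
  | succ i ih => rw [h i hi, ih (by omega), ← pow_mul, ← pow_succ]

namespace Matrix

variable {l m : Type*}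

theorem submatrix_tsum {X R l' m' : Type*} [AddCommMonoid R] [TopologicalSpace R] [T2Space R]
    {f : X → Matrix l m R} (hf : Summable f) (r : l' → l) (c : m' → m) :
    (∑' x, f x).submatrix r c = ∑' x, (f x).submatrix r c :=
  hf.map_tsum (G := Matrix l m R →+ Matrix l' m' R)
    { toFun M := M.submatrix r c, map_zero' := rfl, map_add' _ _ := rfl }
    (continuous_id.matrix_submatrix r c)

variable [Fintype l] [Fintype m] [DecidableEq l] [DecidableEq m]

theorem summable_expSeries {𝔸 : Type*} [NormedRing 𝔸] [NormedAlgebra ℚ 𝔸] [CompleteSpace 𝔸]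
    (M : Matrix l l 𝔸) : Summable fun k : ℕ => (k.factorial⁻¹ : ℚ) • M ^ k := by
  -- Instance search does not see that the operator norm induces the product uniformity.
  have hc : CompleteSpace (Matrix l l 𝔸) := inferInstance
  open scoped Matrix.Norms.Operator in exact @expSeries_summable' ℚ _ _ _ _ _ _ hc M

theorem fromBlocks_zero₂₁_pow {R : Type*} [Semiring R]
    (A : Matrix l l R) (B : Matrix m m R) (E : Matrix l m R) (k : ℕ) :
    ∃ F, fromBlocks A E 0 B ^ k = fromBlocks (A ^ k) F 0 (B ^ k) := by
  induction k with
  | zero => exact ⟨0, by simp [fromBlocks_one]⟩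
  | succ k ih =>
    obtain ⟨F, hF⟩ := ih
    exact ⟨A ^ k * E + F * B, by simp [pow_succ, hF, fromBlocks_multiply]⟩

theorem fromBlocks_zero₂₁_sq {R : Type*} [Semiring R]
    (A : Matrix l l R) (B : Matrix m m R) (E : Matrix l m R) :
    fromBlocks A E 0 B ^ 2 = fromBlocks (A ^ 2) (A * E + E * B) 0 (B ^ 2) := by
  simp [sq, fromBlocks_multiply]

theorem submatrix_exp_of_pow {n p 𝔸 : Type*} [Fintype n] [DecidableEq n] [Fintype p]
    [DecidableEq p] [NormedRing 𝔸] [NormedAlgebra ℚ 𝔸] [CompleteSpace 𝔸] {M : Matrix n n 𝔸}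
    {r : p → n} {N : Matrix p p 𝔸} (h : ∀ k : ℕ, (M ^ k).submatrix r r = N ^ k) :
    (exp M).submatrix r r = exp N := by
  rw [exp_eq_tsum_rat, exp_eq_tsum_rat, submatrix_tsum (summable_expSeries M)]
  exact tsum_congr fun k => by rw [← h k]; rfl

theorem exp_fromBlocks_zero₂₁ {𝔸 : Type*} [NormedRing 𝔸] [NormedAlgebra ℚ 𝔸] [CompleteSpace 𝔸]
    (A : Matrix l l 𝔸) (B : Matrix m m 𝔸) (E : Matrix l m 𝔸) :
    exp (fromBlocks A E 0 B) =
      fromBlocks (exp A) (exp (fromBlocks A E 0 B)).toBlocks₁₂ 0 (exp B) := by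
  set M := fromBlocks A E 0 B
  have h₁₁ : (exp M).toBlocks₁₁ = exp A := submatrix_exp_of_pow fun k => by
    obtain ⟨F, hF⟩ := fromBlocks_zero₂₁_pow A B E k
    rw [hF]; rfl
  have h₂₂ : (exp M).toBlocks₂₂ = exp B := submatrix_exp_of_pow fun k => by
    obtain ⟨F, hF⟩ := fromBlocks_zero₂₁_pow A B E k
    rw [hF]; rfl
  have h₂₁ : (exp M).toBlocks₂₁ = 0 := by
    have := (upper_two_blockTriangular A E B Nat.zero_lt_one).exp
    ext i j
    exact @this (Sum.inr i) (Sum.inl j) (by simp)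
  rw [← h₁₁, ← h₂₁, ← h₂₂, fromBlocks_toBlocks]

end Matrix

/-- Exact-arithmetic correctness of the squaring phase: starting from
`X₀ = exp(2⁻ˢA)`, `Y₀ = exp(2⁻ˢB)`, `D₀ = L_exp(2⁻ˢA, 2⁻ˢB, 2⁻ˢE)` and applying the
recurrence `D_{i+1} = X_i D_i + D_i Y_i`, `X_{i+1} = X_i²`, `Y_{i+1} = Y_i²` for
`i = 0, …, s−1`, one obtains `X_s = exp(A)`, `Y_s = exp(B)`, `D_s = L_exp(A, B, E)`. -/
theorem squaring_phase_exact {n d : ℕ} (A : Matrix (Fin n) (Fin n) ℂ)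
    (B : Matrix (Fin d) (Fin d) ℂ) (E : Matrix (Fin n) (Fin d) ℂ) (s : ℕ)
    (X : ℕ → Matrix (Fin n) (Fin n) ℂ) (Y : ℕ → Matrix (Fin d) (Fin d) ℂ)
    (D : ℕ → Matrix (Fin n) (Fin d) ℂ)
    (hX0 : X 0 = NormedSpace.exp ((((2 : ℂ) ^ s)⁻¹) • A))
    (hY0 : Y 0 = NormedSpace.exp ((((2 : ℂ) ^ s)⁻¹) • B))
    (hD0 : D 0 = Lexp ((((2 : ℂ) ^ s)⁻¹) • A) ((((2 : ℂ) ^ s)⁻¹) • B) ((((2 : ℂ) ^ s)⁻¹) • E))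
    (hD : ∀ i < s, D (i + 1) = X i * D i + D i * Y i)
    (hX : ∀ i < s, X (i + 1) = X i ^ 2)
    (hY : ∀ i < s, Y (i + 1) = Y i ^ 2) :
    X s = NormedSpace.exp A ∧ Y s = NormedSpace.exp B ∧ D s = Lexp A B E := by
  have hsq : ∀ i < s, fromBlocks (X (i + 1)) (D (i + 1)) 0 (Y (i + 1)) =
      fromBlocks (X i) (D i) 0 (Y i) ^ 2 := fun i hi => by
    rw [fromBlocks_zero₂₁_sq, hX i hi, hY i hi, hD i hi]
  have h₀ : fromBlocks (X 0) (D 0) 0 (Y 0) = exp (((2 : ℂ) ^ s)⁻¹ • fromBlocks A E 0 B) := by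
    rw [fromBlocks_smul, smul_zero, exp_fromBlocks_zero₂₁, hX0, hY0, hD0, Lexp]
  have hₛ : fromBlocks (X s) (D s) 0 (Y s) = exp (fromBlocks A E 0 B) := by
    rw [eq_pow_two_pow_of_succ_eq_sq (Z := fun i => fromBlocks (X i) (D i) 0 (Y i)) hsq s le_rfl,
      h₀, ← Matrix.exp_nsmul, ← Nat.cast_smul_eq_nsmul ℂ, Nat.cast_pow, Nat.cast_ofNat,
      smul_inv_smul₀ (pow_ne_zero _ two_ne_zero)]
  rw [exp_fromBlocks_zero₂₁] at hₛ
  obtain ⟨hXs, hDs, -, hYs⟩ := fromBlocks_inj.1 hₛ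
  exact ⟨hXs, hYs, hDs⟩
end

section
/- Let A ∈ ℂ^{n×n}, B ∈ ℂ^{d×d}, E ∈ ℂ^{n×d}. Suppose the spectra of A and B are disjoint (spectrum ℂ A ∩ spectrum ℂ B = ∅). Then L_exp(A, B, E) is the unique matrix X ∈ ℂ^{n×d} satisfying the Sylvester equation A·X − X·B = exp(A)·E − E·exp(B). -/
open NormedSpace Polynomial

namespace Matrix

variable {m p : Type*} [Fintype m] [DecidableEq m] [Fintype p] [DecidableEq p]

theorem exists_fromBlocks_zero₂₁_pow {R : Type*} [Semiring R] (A : Matrix m m R)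
    (B : Matrix p p R) (E : Matrix m p R) (k : ℕ) :
    ∃ F, fromBlocks A E 0 B ^ k = fromBlocks (A ^ k) F 0 (B ^ k) := by
  induction k with
  | zero => exact ⟨0, by rw [pow_zero, pow_zero, pow_zero, fromBlocks_one]⟩
  | succ k ih =>
    obtain ⟨F, hF⟩ := ih
    exact ⟨A ^ k * E + F * B, by simp [pow_succ, hF, fromBlocks_multiply]⟩

section Exp

variable {𝕂 : Type*} [RCLike 𝕂]

theorem hasSum_exp (M : Matrix m m 𝕂) :
    HasSum (fun k : ℕ => (k.factorial⁻¹ : 𝕂) • M ^ k) (exp M) := by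
  have hcomplete : CompleteSpace (Matrix m m 𝕂) := inferInstance
  let _ : NormedRing (Matrix m m 𝕂) := Matrix.linftyOpNormedRing
  let _ : NormedAlgebra 𝕂 (Matrix m m 𝕂) := Matrix.linftyOpNormedAlgebra
  -- the `L∞` operator norm induces the product uniformity, so `hcomplete` still applies
  exact @exp_series_hasSum_exp' 𝕂 _ _ _ _ _ _ hcomplete M

theorem submatrix_exp_of_submatrix_pow {M : Matrix m m 𝕂} {N : Matrix p p 𝕂} {r c : p → m}
    (h : ∀ k : ℕ, (M ^ k).submatrix r c = N ^ k) : (exp M).submatrix r c = exp N := by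
  ext i j
  refine HasSum.unique ?_ (Pi.hasSum.mp (Pi.hasSum.mp (hasSum_exp N) i) j)
  simpa [← h] using Pi.hasSum.mp (Pi.hasSum.mp (hasSum_exp M) (r i)) (c j)

theorem toBlocks₁₁_exp_fromBlocks_zero₂₁ (A : Matrix m m 𝕂) (B : Matrix p p 𝕂)
    (E : Matrix m p 𝕂) : (exp (fromBlocks A E 0 B)).toBlocks₁₁ = exp A :=
  submatrix_exp_of_submatrix_pow fun k => by
    obtain ⟨F, hF⟩ := exists_fromBlocks_zero₂₁_pow A B E k
    exact congrArg toBlocks₁₁ hF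

theorem toBlocks₂₂_exp_fromBlocks_zero₂₁ (A : Matrix m m 𝕂) (B : Matrix p p 𝕂)
    (E : Matrix m p 𝕂) : (exp (fromBlocks A E 0 B)).toBlocks₂₂ = exp B :=
  submatrix_exp_of_submatrix_pow fun k => by
    obtain ⟨F, hF⟩ := exists_fromBlocks_zero₂₁_pow A B E k
    exact congrArg toBlocks₂₂ hF

theorem sylvester_toBlocks₁₂_exp_fromBlocks_zero₂₁ (A : Matrix m m 𝕂) (B : Matrix p p 𝕂)
    (E : Matrix m p 𝕂) :
    A * (exp (fromBlocks A E 0 B)).toBlocks₁₂ - (exp (fromBlocks A E 0 B)).toBlocks₁₂ * B =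
      exp A * E - E * exp B := by
  have hcomm := congrArg toBlocks₁₂ ((Commute.refl (fromBlocks A E 0 B)).exp_right).eq
  rw [← fromBlocks_toBlocks (exp (fromBlocks A E 0 B)), fromBlocks_multiply,
    fromBlocks_multiply, toBlocks_fromBlocks₁₂, toBlocks_fromBlocks₁₂,
    toBlocks₁₁_exp_fromBlocks_zero₂₁, toBlocks₂₂_exp_fromBlocks_zero₂₁] at hcomm
  rw [sub_eq_sub_iff_add_eq_add]
  exact hcomm

end Exp

theorem aeval_mul_eq_mul_aeval {R : Type*} [CommRing R] {A : Matrix m m R} {B : Matrix p p R}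
    {Z : Matrix m p R} (hZ : A * Z = Z * B) (q : R[X]) : aeval A q * Z = Z * aeval B q := by
  induction q using Polynomial.induction_on' with
  | add q r hq hr => rw [map_add, map_add, Matrix.add_mul, Matrix.mul_add, hq, hr]
  | monomial k c =>
    have hpow : A ^ k * Z = Z * B ^ k := by
      induction k with
      | zero => rw [pow_zero, pow_zero, Matrix.one_mul, Matrix.mul_one]
      | succ k ih =>
        rw [pow_succ, pow_succ, Matrix.mul_assoc, hZ, ← Matrix.mul_assoc, ih, Matrix.mul_assoc]
    rw [aeval_monomial, aeval_monomial, ← Algebra.smul_def, ← Algebra.smul_def,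
      Matrix.smul_mul, hpow, Matrix.mul_smul]

section Sylvester

variable {K : Type*} [Field K] [IsAlgClosed K]

theorem isUnit_aeval_charpoly_of_disjoint_spectrum {A : Matrix m m K}
    {B : Matrix p p K} (h : Disjoint (spectrum K A) (spectrum K B)) :
    IsUnit (aeval A B.charpoly) := by
  rcases isEmpty_or_nonempty p with hp | hp
  · rw [charpoly_isEmpty, map_one]
    exact isUnit_one
  have hdeg : 0 < B.charpoly.degree := by
    rw [charpoly_degree_eq_dim]
    exact_mod_cast Fintype.card_pos
  by_contra hA
  rw [← spectrum.zero_mem_iff K, spectrum.map_polynomial_aeval_of_degree_pos A _ hdeg] at hA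
  obtain ⟨μ, hμA, hμB⟩ := hA
  exact h.ne_of_mem hμA (mem_spectrum_iff_isRoot_charpoly.mpr hμB) rfl

theorem eq_zero_of_mul_eq_mul_of_disjoint_spectrum {A : Matrix m m K}
    {B : Matrix p p K} (h : Disjoint (spectrum K A) (spectrum K B)) {Z : Matrix m p K}
    (hZ : A * Z = Z * B) : Z = 0 := by
  have hunit := (isUnit_iff_isUnit_det _).mp (isUnit_aeval_charpoly_of_disjoint_spectrum h)
  rw [← nonsing_inv_mul_cancel_left (A := aeval A B.charpoly) Z hunit, aeval_mul_eq_mul_aeval hZ,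
    aeval_self_charpoly, Matrix.mul_zero, Matrix.mul_zero]

theorem sylvester_injective {A : Matrix m m K} {B : Matrix p p K}
    (h : Disjoint (spectrum K A) (spectrum K B)) :
    Function.Injective fun X : Matrix m p K => A * X - X * B := by
  intro X Y hXY
  rw [← sub_eq_zero]
  refine eq_zero_of_mul_eq_mul_of_disjoint_spectrum h ?_
  rw [Matrix.mul_sub, Matrix.sub_mul, sub_eq_sub_iff_sub_eq_sub]
  exact hXY

end Sylvester

end Matrix

/-- If the spectra of `A` and `B` are disjoint, then `L_exp(A, B, E)` is the unique
solution `X` of the Sylvester equation `A⬝X − X⬝B = exp(A)⬝E − E⬝exp(B)`. -/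
theorem Lexp_unique_sylvester_solution {n d : ℕ} (A : Matrix (Fin n) (Fin n) ℂ)
    (B : Matrix (Fin d) (Fin d) ℂ) (E : Matrix (Fin n) (Fin d) ℂ)
    (h : spectrum ℂ A ∩ spectrum ℂ B = ∅) :
    ∀ X : Matrix (Fin n) (Fin d) ℂ,
      A * X - X * B = NormedSpace.exp A * E - E * NormedSpace.exp B ↔
        X = Lexp A B E := by
  have hLexp : A * Lexp A B E - Lexp A B E * B = exp A * E - E * exp B :=
    Matrix.sylvester_toBlocks₁₂_exp_fromBlocks_zero₂₁ A B E
  intro X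
  rw [← hLexp]
  exact (Matrix.sylvester_injective (Set.disjoint_iff_inter_eq_empty.mpr h)).eq_iff
end

section
/- Let A ∈ ℂ^{n×n}, let p ≥ 1, let w₁, …, w_p ∈ ℂⁿ, and let W ∈ ℂ^{n×p} be the matrix whose columns, from left to right, are w_p, w_{p−1}, …, w₁. Let J ∈ ℂ^{p×p} be the nilpotent Jordan block with ones on the superdiagonal and zeros elsewhere (J_{i,i+1} = 1, all other entries 0). Define φ_j(A) = Σ_{k≥0} A^k / (k+j)! for j ≥ 1 (an everywhere-convergent series). Then the last column of the (1,2) block of exp([[A, W],[0, J]]) equals Σ_{j=1}^{p} φ_j(A)·w_j. -/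
/-!
The power `M ^ k` of the block upper triangular matrix `M = [[A, W], [0, J]]` has upper right
block `∑_{a + b = k - 1} A ^ a * W * J ^ b`. Dividing by `k!` and summing over `k`, the
coefficient of `W * J ^ b` becomes `∑_a A ^ a / (a + b + 1)! = φ_{b+1}(A)`, and since `J ^ p = 0`
only `b < p` contributes. Finally `J ^ b` moves the last column of `W` to column `p - 1 - b`,
which holds `w_{b+1}`.
-/

open scoped Matrix

/-- `φ_j(A) = Σ_{k≥0} A^k / (k+j)!`, an everywhere-convergent series. -/
noncomputable def phiFun {n : ℕ} (j : ℕ) (A : Matrix (Fin n) (Fin n) ℂ) :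
    Matrix (Fin n) (Fin n) ℂ :=
  ∑' k : ℕ, (((k + j).factorial : ℂ))⁻¹ • A ^ k

open Finset NormedSpace
open scoped Nat

namespace Matrix

theorem fromBlocks_zero₂₁_pow_s14 {l m R : Type*} [Fintype l] [DecidableEq l] [Fintype m]
    [DecidableEq m] [Semiring R] (A : Matrix l l R) (W : Matrix l m R) (J : Matrix m m R)
    (k : ℕ) :
    fromBlocks A W 0 J ^ k =
      fromBlocks (A ^ k) (∑ b ∈ range k, A ^ (k - 1 - b) * W * J ^ b) 0 (J ^ k) := by
  induction k with
  | zero => simp [fromBlocks_one]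
  | succ k ih =>
    rw [pow_succ', ih, fromBlocks_multiply, sum_range_succ, Matrix.mul_sum]
    simp only [Matrix.mul_zero, add_zero, Matrix.zero_mul, zero_add, Nat.add_sub_cancel,
      Nat.sub_self, pow_zero, Matrix.one_mul, ← pow_succ']
    congr 2
    refine sum_congr rfl fun b hb => ?_
    rw [← Matrix.mul_assoc, ← Matrix.mul_assoc, ← pow_succ']
    congr 3
    have := mem_range.1 hb
    omega

variable (R : Type*) [Semiring R] (p : ℕ)

def nilpotentJordanBlock : Matrix (Fin p) (Fin p) R :=
  of fun i j => if (i : ℕ) + 1 = j then 1 else 0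

variable {R p}

theorem nilpotentJordanBlock_pow_apply (b : ℕ) (i j : Fin p) :
    (nilpotentJordanBlock R p ^ b) i j = if (i : ℕ) + b = j then 1 else 0 := by
  induction b generalizing j with
  | zero => simp [one_apply, Fin.ext_iff]
  | succ b ih =>
    rw [pow_succ, mul_apply]
    simp only [ih]
    simp only [nilpotentJordanBlock, of_apply, mul_ite, mul_one, mul_zero]
    split_ifs with h
    · rw [sum_eq_single ⟨i + b, by omega⟩
        (fun k _ hk => by simp [Fin.ext_iff] at hk ⊢; omega) (by simp)]
      simp only [if_true]
      exact if_pos (by omega)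
    · exact sum_eq_zero fun k _ => by split_ifs <;> first | rfl | omega

variable (R p)

theorem nilpotentJordanBlock_pow_self : nilpotentJordanBlock R p ^ p = 0 := by
  ext i j
  rw [nilpotentJordanBlock_pow_apply, if_neg (by omega), zero_apply]

variable {R p}

theorem mul_nilpotentJordanBlock_pow_apply {l : Type*} (W : Matrix l (Fin p) R) {b : ℕ} (i : l)
    (j : Fin p) (hb : b ≤ j) : (W * nilpotentJordanBlock R p ^ b) i j = W i ⟨j - b, by omega⟩ := by
  rw [mul_apply, sum_eq_single ⟨j - b, by omega⟩]
  · rw [nilpotentJordanBlock_pow_apply, if_pos (by dsimp only; omega), mul_one]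
  · intro k _ hk
    rw [nilpotentJordanBlock_pow_apply, if_neg fun h => hk (Fin.ext (by dsimp only; omega)),
      mul_zero]
  · simp

end Matrix

theorem hasSum_phiFun {n : ℕ} (j : ℕ) (A : Matrix (Fin n) (Fin n) ℂ) :
    HasSum (fun k => ((k + j)! : ℂ)⁻¹ • A ^ k) (phiFun j A) := by
  open scoped Matrix.Norms.Operator in
  refine Summable.hasSum (.of_norm_bounded (norm_expSeries_summable' (𝕂 := ℂ) A) fun k => ?_)
  rw [norm_smul, norm_smul]
  gcongr
  rw [norm_inv, norm_inv, Complex.norm_natCast, Complex.norm_natCast]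
  gcongr
  exact Nat.le_add_right k j

theorem hasSum_phiFun_mul {n : ℕ} {m : Type*} [Fintype m] (j : ℕ) (A : Matrix (Fin n) (Fin n) ℂ)
    (B : Matrix (Fin n) m ℂ) :
    HasSum (fun k => ((k + j)! : ℂ)⁻¹ • (A ^ k * B)) (phiFun j A * B) := by
  simpa only [Function.comp_def, AddMonoidHom.mk'_apply, Matrix.smul_mul] using
    (hasSum_phiFun j A).map (AddMonoidHom.mk' (· * B) fun X Y => Matrix.add_mul X Y B)
      (continuous_id.matrix_mul continuous_const)

theorem toBlocks₁₂_exp_fromBlocks_zero₂₁ {n : ℕ} {m : Type*} [Fintype m] [DecidableEq m]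
    (A : Matrix (Fin n) (Fin n) ℂ) (W : Matrix (Fin n) m ℂ) {J : Matrix m m ℂ} {p : ℕ}
    (hJ : J ^ p = 0) :
    (exp (Matrix.fromBlocks A W 0 J)).toBlocks₁₂ =
      ∑ b ∈ range p, phiFun (b + 1) A * W * J ^ b := by
  -- The series converges in the entrywise topology; a norm is only needed to prove it.
  have hexp : HasSum (fun k => (k ! : ℂ)⁻¹ • Matrix.fromBlocks A W 0 J ^ k)
      (exp (Matrix.fromBlocks A W 0 J)) :=
    open scoped Matrix.Norms.Operator in exp_series_hasSum_exp' _
  have hexp₁₂ : HasSum (fun k => (k ! : ℂ)⁻¹ • ∑ b ∈ range k, A ^ (k - 1 - b) * W * J ^ b)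
      (exp (Matrix.fromBlocks A W 0 J)).toBlocks₁₂ := by
    simp only [Matrix.fromBlocks_zero₂₁_pow_s14, Matrix.fromBlocks_smul, smul_zero] at hexp
    exact hexp.map (AddMonoidHom.mk' Matrix.toBlocks₁₂ fun _ _ => rfl)
        (continuous_id.matrix_submatrix Sum.inl Sum.inr)
  have hterm : ∀ b, HasSum (fun k => if b < k then (k ! : ℂ)⁻¹ • (A ^ (k - 1 - b) * W * J ^ b)
      else 0) (phiFun (b + 1) A * W * J ^ b) := by
    intro b
    rw [← hasSum_nat_add_iff' (b + 1),
      sum_eq_zero fun k hk => if_neg (by simp only [mem_range] at hk; omega), sub_zero,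
      Matrix.mul_assoc]
    refine (hasSum_phiFun_mul (b + 1) A (W * J ^ b)).congr_fun fun k => ?_
    rw [if_pos (by omega), ← add_assoc, Nat.add_sub_cancel, Nat.add_sub_cancel, Matrix.mul_assoc]
  refine hexp₁₂.unique ((hasSum_sum fun b _ => hterm b).congr_fun fun k => ?_)
  have hvanish : ∀ b ∈ range k, b ∉ range (min p k) → A ^ (k - 1 - b) * W * J ^ b = 0 :=
    fun b hbk hb => by
      rw [pow_eq_zero_of_le (by simp only [mem_range] at hbk hb; omega) hJ, Matrix.mul_zero]
  rw [← sum_subset (range_subset_range.2 (min_le_right p k)) hvanish, smul_sum, ← sum_filter]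
  congr 1
  ext b
  simp only [mem_range, mem_filter]
  omega

/-- Let `W` have columns (left to right) `w_p, …, w₁` and let `J` be the nilpotent
Jordan block with ones on the superdiagonal. Then the last column of the `(1,2)` block
of `exp [[A, W],[0, J]]` equals `Σ_{j=1}^p φ_j(A)·w_j`. -/
theorem phi_linear_combination {n p : ℕ} (hp : 1 ≤ p)
    (A : Matrix (Fin n) (Fin n) ℂ) (w : Fin p → Fin n → ℂ) :
    (fun i =>
        (NormedSpace.exp
            (Matrix.fromBlocks A
              (Matrix.of fun i (j : Fin p) => w j.rev i)
              0
              (Matrix.of fun i j : Fin p => if (i : ℕ) + 1 = (j : ℕ) then 1 else 0))).toBlocks₁₂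
          i ⟨p - 1, by omega⟩) =
      ∑ j : Fin p, phiFun ((j : ℕ) + 1) A *ᵥ w j := by
  change (fun i => (exp (Matrix.fromBlocks A _ 0 (Matrix.nilpotentJordanBlock ℂ p))).toBlocks₁₂
    i _) = _
  rw [toBlocks₁₂_exp_fromBlocks_zero₂₁ _ _ (Matrix.nilpotentJordanBlock_pow_self ℂ p),
    ← Fin.sum_univ_eq_sum_range]
  ext i
  simp only [Matrix.sum_apply, Finset.sum_apply]
  refine sum_congr rfl fun b _ => ?_
  rw [Matrix.mul_assoc, Matrix.mul_apply, Matrix.mulVec, dotProduct]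
  refine sum_congr rfl fun k _ => ?_
  rw [Matrix.mul_nilpotentJordanBlock_pow_apply _ _ _ (by dsimp only; omega), Matrix.of_apply]
  congr 2
  ext
  simp only [Fin.val_rev]
  omega
end
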